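/- arXiv:2408.14022 — 2 statements merged into one kernel-verified Lean document; each statement's English description precedes it below -/
import Mathlib

section
/- Let G[S] be a locally h-clique densest subgraph of G. Then for every vertex u ∈ S, the h-clique compact number of u equals the h-clique density of G[S], i.e., φ_h(u) = d_h(G[S]). In particular, for every ρ ≥ 0 and every S'' ⊆ V with u ∈ S'' such that G[S''] is h-clique ρ-compact, one has ρ ≤ d_h(G[S]). -/
open Finset

variable {V : Type*} [Fintype V] [DecidableEq V]

/-- `Ψ_h(G[S])`: the set of `h`-cliques of `G` all of whose vertices lie in `S`
(equivalently, the `h`-cliques of the induced subgraph `G[S]`). -/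
def cliquesIn (G : SimpleGraph V) [DecidableRel G.Adj] (h : ℕ) (S : Finset V) :
    Finset (Finset V) :=
  Finset.univ.filter fun c => G.IsNClique h c ∧ c ⊆ S

/-- the `h`-clique density `d_h(G[S]) = |Ψ_h(G[S])| / |S|`. -/
noncomputable def cliqueDensity (G : SimpleGraph V) [DecidableRel G.Adj] (h : ℕ)
    (S : Finset V) : ℝ :=
  ((cliquesIn G h S).card : ℝ) / (S.card : ℝ)

/-- `G[S]` is `h`-clique `ρ`-compact: `S` is nonempty, the induced subgraph is
connected, and removing any nonempty `U ⊆ S` removes at least `ρ·|U|` `h`-cliques. -/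
def IsCliqueCompact (G : SimpleGraph V) [DecidableRel G.Adj] (h : ℕ) (ρ : ℝ)
    (S : Finset V) : Prop :=
  S.Nonempty ∧ (G.induce (S : Set V)).Connected ∧
    ∀ U ⊆ S, U.Nonempty →
      ρ * (U.card : ℝ) ≤ ((cliquesIn G h S).card : ℝ) - ((cliquesIn G h (S \ U)).card : ℝ)

/-- `G[S]` is a locally `h`-clique densest subgraph of `G`. -/
def IsLhCDS (G : SimpleGraph V) [DecidableRel G.Adj] (h : ℕ) (S : Finset V) : Prop :=
  IsCliqueCompact G h (cliqueDensity G h S) S ∧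
    ¬ ∃ S' : Finset V, S ⊂ S' ∧ IsCliqueCompact G h (cliqueDensity G h S) S'

/-- the `h`-clique compact number `φ_h(u)` of a vertex `u`. -/
noncomputable def compactNumber (G : SimpleGraph V) [DecidableRel G.Adj] (h : ℕ)
    (u : V) : ℝ :=
  sSup {ρ : ℝ | 0 ≤ ρ ∧ ∃ S : Finset V, u ∈ S ∧ IsCliqueCompact G h ρ S}

/-- `α` is a feasible solution to the convex program `CP(G,h)`: each `h`-clique
distributes a unit weight, nonnegatively, among its vertices. -/
def CPFeasible (G : SimpleGraph V) [DecidableRel G.Adj] (h : ℕ)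
    (α : Finset V → V → ℝ) : Prop :=
  (∀ ψ ∈ cliquesIn G h Finset.univ, ∀ u ∈ ψ, 0 ≤ α ψ u) ∧
    (∀ ψ ∈ cliquesIn G h Finset.univ, ∑ u ∈ ψ, α ψ u = 1)

/-- `r(u)`: the total weight received by vertex `u` under `α`. -/
def cpR (G : SimpleGraph V) [DecidableRel G.Adj] (h : ℕ) (α : Finset V → V → ℝ)
    (u : V) : ℝ :=
  ∑ ψ ∈ (cliquesIn G h Finset.univ).filter (fun ψ => u ∈ ψ), α ψ u

/-- `α` is an optimal solution to `CP(G,h)`: it is feasible and minimizes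
`Σ_u r(u)²` over all feasible solutions. -/
def CPOptimal (G : SimpleGraph V) [DecidableRel G.Adj] (h : ℕ)
    (α : Finset V → V → ℝ) : Prop :=
  CPFeasible G h α ∧
    ∀ β : Finset V → V → ℝ, CPFeasible G h β →
      ∑ u : V, (cpR G h α u) ^ 2 ≤ ∑ u : V, (cpR G h β u) ^ 2

/-!
If `T ∋ u` were `ρ`-compact with `ρ > d := d_h(G[S])`, then `S ∪ T` would be `d`-compact: the
cliques that a set `U` removes from `S ∪ T` include the cliques that `U ∩ T` removes from `T` and,
disjointly, those that `U ∖ T` removes from `S`. Maximality of `S` then forces `T ⊆ S`. But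
removing `S ∖ T` from `S` shows `|Ψ_h(G[T])| ≤ d·|T|`, whereas removing all of `T` from `T` gives
`|Ψ_h(G[T])| ≥ ρ·|T|`. Hence `d` bounds every compactness level at `u`, and `S` attains it.
-/

section

variable (G : SimpleGraph V) [DecidableRel G.Adj] (h : ℕ)

lemma cliquesIn_mono {S T : Finset V} (hST : S ⊆ T) : cliquesIn G h S ⊆ cliquesIn G h T :=
  fun _ hc ↦ by
    simp only [cliquesIn, mem_filter] at hc ⊢
    exact ⟨hc.1, hc.2.1, hc.2.2.trans hST⟩

lemma cliquesIn_sdiff (S U : Finset V) :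
    cliquesIn G h (S \ U) = (cliquesIn G h S).filter (Disjoint · U) := by
  ext c
  simp only [cliquesIn, mem_filter, mem_univ, true_and, subset_sdiff, and_assoc]

lemma card_cliquesIn_sub_card_cliquesIn_sdiff (S U : Finset V) :
    ((cliquesIn G h S).card : ℝ) - (cliquesIn G h (S \ U)).card =
      ((cliquesIn G h S).filter (¬ Disjoint · U)).card := by
  rw [cliquesIn_sdiff, sub_eq_iff_eq_add, ← Nat.cast_add, add_comm,
    card_filter_add_card_filter_not]

lemma cliqueDensity_nonneg (S : Finset V) : 0 ≤ cliqueDensity G h S := by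
  unfold cliqueDensity
  positivity

variable {G h}

namespace IsCliqueCompact

lemma mul_card_le_card_filter {ρ : ℝ} {S U : Finset V} (hS : IsCliqueCompact G h ρ S)
    (hU : U ⊆ S) : ρ * U.card ≤ ((cliquesIn G h S).filter (¬ Disjoint · U)).card := by
  rcases U.eq_empty_or_nonempty with rfl | hUne
  · simp
  · rw [← card_cliquesIn_sub_card_cliquesIn_sdiff]
    exact hS.2.2 U hU hUne

lemma mul_card_le_card_cliquesIn {ρ : ℝ} {S : Finset V} (hS : IsCliqueCompact G h ρ S) :
    ρ * S.card ≤ (cliquesIn G h S).card :=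
  (hS.mul_card_le_card_filter subset_rfl).trans <| by exact_mod_cast card_filter_le _ _

lemma card_cliquesIn_le_of_subset {S T : Finset V}
    (hS : IsCliqueCompact G h (cliqueDensity G h S) S) (hTS : T ⊆ S) :
    ((cliquesIn G h T).card : ℝ) ≤ cliqueDensity G h S * T.card := by
  have hremove := hS.mul_card_le_card_filter (sdiff_subset (s := S) (t := T))
  rw [← card_cliquesIn_sub_card_cliquesIn_sdiff, Finset.sdiff_sdiff_eq_self hTS,
    card_sdiff_of_subset hTS, Nat.cast_sub (card_le_card hTS)] at hremove
  have hSdensity : cliqueDensity G h S * S.card = (cliquesIn G h S).card :=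
    div_mul_cancel₀ _ (Nat.cast_ne_zero.mpr (card_pos.mpr hS.1).ne')
  linarith

lemma union {d ρ : ℝ} {S T : Finset V} (hdρ : d ≤ ρ) (hS : IsCliqueCompact G h d S)
    (hT : IsCliqueCompact G h ρ T) (hST : (S ∩ T).Nonempty) :
    IsCliqueCompact G h d (S ∪ T) := by
  refine ⟨hS.1.mono subset_union_left, ?_, fun U hU _ ↦ ?_⟩
  · obtain ⟨u, hu⟩ := hST
    rw [coe_union]
    exact SimpleGraph.induce_union_connected hS.2.1.preconnected hT.2.1.preconnected
      ⟨u, mem_inter.mp hu⟩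
  rw [card_cliquesIn_sub_card_cliquesIn_sdiff]
  have hUT : U \ T ⊆ S := fun x hx ↦
    (mem_union.mp (hU (mem_sdiff.mp hx).1)).resolve_right (mem_sdiff.mp hx).2
  have hfromT := hT.mul_card_le_card_filter (inter_subset_right (s₁ := U))
  have hfromS := hS.mul_card_le_card_filter hUT
  have hdisjoint : Disjoint ((cliquesIn G h T).filter (¬ Disjoint · (U ∩ T)))
      ((cliquesIn G h S).filter (¬ Disjoint · (U \ T))) := by
    refine disjoint_left.mpr fun c hc₁ hc₂ ↦ (mem_filter.mp hc₂).2 ?_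
    have hcT : c ⊆ T := (mem_filter.mp (mem_filter.mp hc₁).1).2.2
    exact disjoint_of_subset_left hcT disjoint_sdiff
  have hsubset : (cliquesIn G h T).filter (¬ Disjoint · (U ∩ T)) ∪
      (cliquesIn G h S).filter (¬ Disjoint · (U \ T)) ⊆
      (cliquesIn G h (S ∪ T)).filter (¬ Disjoint · U) := by
    refine union_subset (fun c hc ↦ ?_) (fun c hc ↦ ?_) <;> rw [mem_filter] at hc ⊢
    · exact ⟨cliquesIn_mono G h subset_union_right hc.1,
        fun hcU ↦ hc.2 (disjoint_of_subset_right inter_subset_left hcU)⟩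
    · exact ⟨cliquesIn_mono G h subset_union_left hc.1,
        fun hcU ↦ hc.2 (disjoint_of_subset_right sdiff_subset hcU)⟩
  have hcount := (Nat.cast_le (α := ℝ)).mpr (card_le_card hsubset)
  rw [card_union_of_disjoint hdisjoint, Nat.cast_add] at hcount
  have hsplit : ((U ∩ T).card : ℝ) + (U \ T).card = U.card := by
    exact_mod_cast card_inter_add_card_sdiff U T
  have hscale : d * (U ∩ T).card ≤ ρ * (U ∩ T).card := by gcongr
  calc d * U.card = d * (U ∩ T).card + d * (U \ T).card := by rw [← hsplit, mul_add]
    _ ≤ _ := by linarith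

end IsCliqueCompact

lemma IsLhCDS.le_cliqueDensity {S T : Finset V} {u : V} {ρ : ℝ} (hS : IsLhCDS G h S)
    (huS : u ∈ S) (huT : u ∈ T) (hT : IsCliqueCompact G h ρ T) : ρ ≤ cliqueDensity G h S := by
  by_contra! hlt
  have hTS : T ⊆ S := by
    by_contra hTS
    exact hS.2 ⟨S ∪ T, Finset.ssubset_iff_subset_ne.mpr ⟨subset_union_left,
        fun hEq ↦ hTS (hEq ▸ subset_union_right)⟩,
      hS.1.union hlt.le hT ⟨u, mem_inter.mpr ⟨huS, huT⟩⟩⟩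
  have hTpos : (0 : ℝ) < T.card := by exact_mod_cast card_pos.mpr hT.1
  have hlower := hT.mul_card_le_card_cliquesIn
  have hupper := hS.1.card_cliquesIn_le_of_subset hTS
  nlinarith

end

theorem stmt_4_general (G : SimpleGraph V) [DecidableRel G.Adj] (h : ℕ)
    (S : Finset V) (hS : IsLhCDS G h S) (u : V) (hu : u ∈ S) :
    compactNumber G h u = cliqueDensity G h S ∧
      ∀ ρ : ℝ, 0 ≤ ρ → ∀ S'' : Finset V, u ∈ S'' →
        IsCliqueCompact G h ρ S'' → ρ ≤ cliqueDensity G h S := by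
  have hbound : cliqueDensity G h S ∈
      upperBounds {ρ : ℝ | 0 ≤ ρ ∧ ∃ T : Finset V, u ∈ T ∧ IsCliqueCompact G h ρ T} :=
    fun _ ⟨_, _, huT, hT⟩ ↦ hS.le_cliqueDensity hu huT hT
  exact ⟨IsGreatest.csSup_eq ⟨⟨cliqueDensity_nonneg G h S, S, hu, hS.1⟩, hbound⟩,
    fun _ _ _ huT hT ↦ hS.le_cliqueDensity hu huT hT⟩

/-- If `G[S]` is an LhCDS, then for every `u ∈ S` the `h`-clique
compact number of `u` equals `d_h(G[S])`; in particular every `h`-clique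
`ρ`-compact subgraph containing `u` (with `ρ ≥ 0`) has `ρ ≤ d_h(G[S])`. -/
theorem stmt_4 (G : SimpleGraph V) [DecidableRel G.Adj] (h : ℕ) (hh : 2 ≤ h)
    (S : Finset V) (hS : IsLhCDS G h S) (u : V) (hu : u ∈ S) :
    compactNumber G h u = cliqueDensity G h S ∧
      ∀ ρ : ℝ, 0 ≤ ρ → ∀ S'' : Finset V, u ∈ S'' →
        IsCliqueCompact G h ρ S'' → ρ ≤ cliqueDensity G h S :=
  stmt_4_general G h S hS u hu
end

section
/- Let n = |V| ≥ 1 and let ρ be a nonnegative rational number that can be written as ρ = a/b with integers a ≥ 0 and 1 ≤ b ≤ n. Suppose G contains at least one h-clique ρ-compact induced subgraph. Let S₂ ⊆ V be a set of maximum cardinality among the sets maximizing the function S ↦ |Ψ_h(G[S])| − (ρ − 1/n²)·|S| over all subsets S ⊆ V. Then S₂ equals the union of the vertex sets of all maximal h-clique ρ-compact subgraphs of G. -/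
open Finset

variable {V : Type*} [Fintype V] [DecidableEq V]

lemma mem_cliquesIn {G : SimpleGraph V} [DecidableRel G.Adj] {h : ℕ} {S : Finset V}
    {c : Finset V} : c ∈ cliquesIn G h S ↔ G.IsNClique h c ∧ c ⊆ S := by
  simp [cliquesIn]

lemma cliquesIn_mono_s17 (G : SimpleGraph V) [DecidableRel G.Adj] (h : ℕ) {A B : Finset V}
    (hAB : A ⊆ B) : cliquesIn G h A ⊆ cliquesIn G h B := by
  intro c hc
  rw [mem_cliquesIn] at *
  exact ⟨hc.1, hc.2.trans hAB⟩

lemma cliquesIn_empty (G : SimpleGraph V) [DecidableRel G.Adj] {h : ℕ} (hh : 1 ≤ h) :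
    cliquesIn G h (∅ : Finset V) = ∅ := by
  ext c
  simp only [mem_cliquesIn, Finset.notMem_empty, iff_false, not_and,
    Finset.subset_empty]
  rintro hc rfl
  have := hc.card_eq
  simp at this
  omega
set_option maxHeartbeats 1000000 in
/-- Let `n = |V| ≥ 1`, `ρ = a/b` with `a ≥ 0`, `1 ≤ b ≤ n`. If `G`
has an `h`-clique `ρ`-compact induced subgraph and `S₂` has maximum cardinality
among the maximizers of `S ↦ |Ψ_h(G[S])| − (ρ − 1/n²)·|S|`, then `S₂` is the union
of the vertex sets of all maximal `h`-clique `ρ`-compact subgraphs of `G`. -/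
theorem stmt_17 (G : SimpleGraph V) [DecidableRel G.Adj] (h : ℕ) (hh : 2 ≤ h)
    (hn : 1 ≤ Fintype.card V) (a b : ℕ) (hb1 : 1 ≤ b) (hbn : b ≤ Fintype.card V)
    (ρ : ℝ) (hρ : ρ = (a : ℝ) / (b : ℝ))
    (hex : ∃ S : Finset V, IsCliqueCompact G h ρ S)
    (S₂ : Finset V)
    (hmax : ∀ S : Finset V,
      ((cliquesIn G h S).card : ℝ) - (ρ - 1 / (Fintype.card V : ℝ) ^ 2) * (S.card : ℝ) ≤
        ((cliquesIn G h S₂).card : ℝ) - (ρ - 1 / (Fintype.card V : ℝ) ^ 2) * (S₂.card : ℝ))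
    (hcard : ∀ S : Finset V,
      ((cliquesIn G h S).card : ℝ) - (ρ - 1 / (Fintype.card V : ℝ) ^ 2) * (S.card : ℝ) =
          ((cliquesIn G h S₂).card : ℝ) - (ρ - 1 / (Fintype.card V : ℝ) ^ 2) * (S₂.card : ℝ) →
        S.card ≤ S₂.card) :
    (S₂ : Set V) =
      {v : V | ∃ S : Finset V,
        (IsCliqueCompact G h ρ S ∧
          ¬ ∃ S' : Finset V, S ⊂ S' ∧ IsCliqueCompact G h ρ S') ∧ v ∈ S} := by
  classical
  obtain ⟨S₀, hS₀⟩ := hex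
  set n := Fintype.card V with hndef
  have hn1 : (1:ℝ) ≤ (n:ℝ) := by exact_mod_cast hn
  have hn2pos : (0:ℝ) < (n:ℝ)^2 := by positivity
  have hεpos : (0:ℝ) < 1/(n:ℝ)^2 := by positivity
  have hb0 : (0:ℝ) < (b:ℝ) := by exact_mod_cast hb1
  -- every ρ-compact set is contained in S₂
  have hsub : ∀ S : Finset V, IsCliqueCompact G h ρ S → S ⊆ S₂ := by
    intro S hS
    by_contra hns
    have hU : (S \ S₂).Nonempty := by rwa [Finset.sdiff_nonempty]
    have h1 := hS.2.2 (S \ S₂) Finset.sdiff_subset hU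
    rw [Finset.sdiff_sdiff_self_left] at h1
    have hm1 : cliquesIn G h (S ∩ S₂) ⊆ cliquesIn G h S :=
      cliquesIn_mono_s17 G h Finset.inter_subset_left
    have hm2 : cliquesIn G h S₂ ⊆ cliquesIn G h (S ∪ S₂) :=
      cliquesIn_mono_s17 G h Finset.subset_union_right
    have hincl : cliquesIn G h S \ cliquesIn G h (S ∩ S₂) ⊆
        cliquesIn G h (S ∪ S₂) \ cliquesIn G h S₂ := by
      intro c hc
      rw [Finset.mem_sdiff, mem_cliquesIn, mem_cliquesIn] at hc
      rw [Finset.mem_sdiff, mem_cliquesIn, mem_cliquesIn]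
      refine ⟨⟨hc.1.1, hc.1.2.trans Finset.subset_union_left⟩, fun hcon => ?_⟩
      exact hc.2 ⟨hc.1.1, fun x hx => Finset.mem_inter.2 ⟨hc.1.2 hx, hcon.2 hx⟩⟩
    have hAB : ((cliquesIn G h S).card:ℝ) - (cliquesIn G h (S ∩ S₂)).card
        = ((cliquesIn G h S \ cliquesIn G h (S ∩ S₂)).card : ℝ) := by
      rw [Finset.card_sdiff_of_subset hm1, Nat.cast_sub (Finset.card_le_card hm1)]
    have hCD : ((cliquesIn G h (S ∪ S₂)).card:ℝ) - (cliquesIn G h S₂).card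
        = ((cliquesIn G h (S ∪ S₂) \ cliquesIn G h S₂).card : ℝ) := by
      rw [Finset.card_sdiff_of_subset hm2, Nat.cast_sub (Finset.card_le_card hm2)]
    have hle : ((cliquesIn G h S \ cliquesIn G h (S ∩ S₂)).card : ℝ) ≤
        ((cliquesIn G h (S ∪ S₂) \ cliquesIn G h S₂).card : ℝ) := by
      exact_mod_cast Finset.card_le_card hincl
    have hcup : ((S ∪ S₂).card : ℝ) = ((S \ S₂).card : ℝ) + (S₂.card : ℝ) := by
      exact_mod_cast (Finset.card_sdiff_add_card S S₂).symm
    have hmx := hmax (S ∪ S₂)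
    rw [hcup] at hmx
    have hexp : (ρ - 1/(n:ℝ)^2) * (((S \ S₂).card:ℝ) + (S₂.card:ℝ))
        = (ρ - 1/(n:ℝ)^2) * ((S \ S₂).card:ℝ) + (ρ - 1/(n:ℝ)^2) * (S₂.card:ℝ) := by
      ring
    have hexp2 : (ρ - 1/(n:ℝ)^2) * ((S \ S₂).card:ℝ)
        = ρ * ((S \ S₂).card:ℝ) - (1/(n:ℝ)^2) * ((S \ S₂).card:ℝ) := by ring
    have hU1 : (1:ℝ) ≤ ((S \ S₂).card : ℝ) := by
      exact_mod_cast Finset.card_pos.2 hU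
    have hprod : 1/(n:ℝ)^2 ≤ (1/(n:ℝ)^2) * ((S \ S₂).card:ℝ) := by
      nlinarith
    linarith
  -- the existing compact set gives a global lower bound
  have hS₀card : (1:ℝ) ≤ (S₀.card : ℝ) := by exact_mod_cast Finset.card_pos.2 hS₀.1
  have hΨ₀ : ρ * (S₀.card : ℝ) ≤ ((cliquesIn G h S₀).card : ℝ) := by
    have h1 := hS₀.2.2 S₀ (Finset.Subset.refl _) hS₀.1
    rwa [Finset.sdiff_self, cliquesIn_empty G (by omega), Finset.card_empty,
      Nat.cast_zero, sub_zero] at h1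
  have hs2n : (S₂.card : ℝ) ≤ (n:ℝ) := by exact_mod_cast Finset.card_le_univ S₂
  have hglob : ρ * (S₂.card:ℝ) - 1 < ((cliquesIn G h S₂).card : ℝ) := by
    have h0 := hmax S₀
    have e0 : (ρ - 1/(n:ℝ)^2) * (S₀.card:ℝ)
        = ρ * (S₀.card:ℝ) - (1/(n:ℝ)^2) * (S₀.card:ℝ) := by ring
    have e2 : (ρ - 1/(n:ℝ)^2) * (S₂.card:ℝ)
        = ρ * (S₂.card:ℝ) - (1/(n:ℝ)^2) * (S₂.card:ℝ) := by ring
    have p1 : 1/(n:ℝ)^2 ≤ (1/(n:ℝ)^2) * (S₀.card:ℝ) := by nlinarith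
    have p2 : (1/(n:ℝ)^2) * (S₂.card:ℝ) ≤ (1/(n:ℝ)^2) * (n:ℝ) := by nlinarith
    have p3 : (1/(n:ℝ)^2) * (n:ℝ) ≤ 1 := by
      rw [div_mul_eq_mul_div, one_mul, div_le_one hn2pos]
      nlinarith
    linarith
  ext v
  simp only [Finset.mem_coe, Set.mem_setOf_eq]
  constructor
  · intro hvS₂
    have hvM : v ∈ (↑S₂ : Set V) := Finset.mem_coe.2 hvS₂
    set C : Finset V := S₂.filter (fun w => ∃ hw : w ∈ (↑S₂ : Set V),
      (G.induce (↑S₂ : Set V)).Reachable ⟨w, hw⟩ ⟨v, hvM⟩) with hCdef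
    have hCmem : ∀ w : V, w ∈ C ↔ w ∈ S₂ ∧ ∃ hw : w ∈ (↑S₂ : Set V),
        (G.induce (↑S₂ : Set V)).Reachable ⟨w, hw⟩ ⟨v, hvM⟩ := by
      intro w; rw [hCdef, Finset.mem_filter]
    have hCsub : C ⊆ S₂ := Finset.filter_subset _ _
    have hvC : v ∈ C := (hCmem v).2 ⟨hvS₂, ⟨hvM, SimpleGraph.Reachable.refl _⟩⟩
    -- walks in the component stay in C and transfer to the induced graph on C
    have hkey : ∀ (x y : ↥(↑S₂ : Set V)) (p : (G.induce (↑S₂ : Set V)).Walk x y)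
        (hyC : (y:V) ∈ C), ∃ hxC : (x:V) ∈ C,
          (G.induce (↑C : Set V)).Reachable ⟨x, Finset.mem_coe.2 hxC⟩
            ⟨y, Finset.mem_coe.2 hyC⟩ := by
      intro x y p
      induction p with
      | nil => intro hyC; exact ⟨hyC, SimpleGraph.Reachable.refl _⟩
      | @cons xu xv xw hadj q ih =>
        intro hyC
        obtain ⟨hvC', hr⟩ := ih hyC
        obtain ⟨hv₂, hvw, hreach⟩ := (hCmem _).1 hvC'
        have huC : (xu:V) ∈ C := by
          refine (hCmem _).2 ⟨by exact_mod_cast xu.2, ⟨xu.2, ?_⟩⟩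
          exact (hadj.reachable).trans hreach
        have hadjC : (G.induce (↑C : Set V)).Adj ⟨(xu:V), Finset.mem_coe.2 huC⟩
            ⟨(xv:V), Finset.mem_coe.2 hvC'⟩ := hadj
        exact ⟨huC, hadjC.reachable.trans hr⟩
    have hreachv : ∀ x : ↥(↑C : Set V),
        (G.induce (↑C : Set V)).Reachable x ⟨v, Finset.mem_coe.2 hvC⟩ := by
      intro x
      obtain ⟨hxS₂, hw, hreach⟩ := (hCmem (x:V)).1 (Finset.mem_coe.1 x.2)
      obtain ⟨p⟩ := hreach
      obtain ⟨hxC, r⟩ := hkey ⟨(x:V), hw⟩ ⟨v, hvM⟩ p hvC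
      exact r
    have hCconn : (G.induce (↑C : Set V)).Connected := by
      rw [SimpleGraph.connected_iff]
      exact ⟨fun x y => (hreachv x).trans (hreachv y).symm, ⟨⟨v, Finset.mem_coe.2 hvC⟩⟩⟩
    -- C is ρ-compact
    have hCcompact : IsCliqueCompact G h ρ C := by
      refine ⟨⟨v, hvC⟩, hCconn, ?_⟩
      intro U hUC hUne
      have hUS₂ : U ⊆ S₂ := hUC.trans hCsub
      -- cliques of S₂ meeting U lie in C
      have hcliq : cliquesIn G h S₂ \ cliquesIn G h (S₂ \ U) ⊆
          cliquesIn G h C \ cliquesIn G h (C \ U) := by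
        intro c hc
        rw [Finset.mem_sdiff, mem_cliquesIn, mem_cliquesIn] at hc
        obtain ⟨⟨hclique, hcS₂⟩, hnot⟩ := hc
        have hns : ¬ c ⊆ S₂ \ U := fun hcon => hnot ⟨hclique, hcon⟩
        obtain ⟨u, huc, hu'⟩ := Finset.not_subset.1 hns
        have huU : u ∈ U := by
          by_contra hcon
          exact hu' (Finset.mem_sdiff.2 ⟨hcS₂ huc, hcon⟩)
        have huC : u ∈ C := hUC huU
        obtain ⟨hu₂, huw, hur⟩ := (hCmem u).1 huC
        have hcC : c ⊆ C := by
          intro w hwc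
          by_cases hwu : w = u
          · rw [hwu]; exact huC
          · have hadj : G.Adj w u := hclique.1 (by exact_mod_cast hwc)
              (by exact_mod_cast huc) hwu
            have hw₂ : w ∈ (↑S₂ : Set V) := Finset.mem_coe.2 (hcS₂ hwc)
            have hadj' : (G.induce (↑S₂ : Set V)).Adj ⟨w, hw₂⟩ ⟨u, huw⟩ := hadj
            exact (hCmem w).2 ⟨hcS₂ hwc, ⟨hw₂, hadj'.reachable.trans hur⟩⟩
        rw [Finset.mem_sdiff, mem_cliquesIn, mem_cliquesIn]
        refine ⟨⟨hclique, hcC⟩, fun hcon => ?_⟩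
        exact (Finset.mem_sdiff.1 (hcon.2 huc)).2 huU
      -- counting
      have hmono1 : cliquesIn G h (S₂ \ U) ⊆ cliquesIn G h S₂ :=
        cliquesIn_mono_s17 G h Finset.sdiff_subset
      have hmono2 : cliquesIn G h (C \ U) ⊆ cliquesIn G h C :=
        cliquesIn_mono_s17 G h Finset.sdiff_subset
      set M : ℕ := (cliquesIn G h C \ cliquesIn G h (C \ U)).card with hMdef
      have hABr : ((cliquesIn G h S₂).card:ℝ) - (cliquesIn G h (S₂ \ U)).card
          = ((cliquesIn G h S₂ \ cliquesIn G h (S₂ \ U)).card : ℝ) := by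
        rw [Finset.card_sdiff_of_subset hmono1, Nat.cast_sub (Finset.card_le_card hmono1)]
      have hCDr : ((cliquesIn G h C).card:ℝ) - (cliquesIn G h (C \ U)).card
          = (M:ℝ) := by
        rw [hMdef, Finset.card_sdiff_of_subset hmono2, Nat.cast_sub (Finset.card_le_card hmono2)]
      have hler : ((cliquesIn G h S₂ \ cliquesIn G h (S₂ \ U)).card : ℝ) ≤ (M:ℝ) := by
        exact_mod_cast Finset.card_le_card hcliq
      have hm := hmax (S₂ \ U)
      have hcsd : ((S₂ \ U).card : ℝ) = (S₂.card:ℝ) - (U.card:ℝ) := by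
        rw [Finset.card_sdiff_of_subset hUS₂, Nat.cast_sub (Finset.card_le_card hUS₂)]
      rw [hcsd] at hm
      have hexp : (ρ - 1/(n:ℝ)^2) * ((S₂.card:ℝ) - (U.card:ℝ))
          = (ρ - 1/(n:ℝ)^2) * (S₂.card:ℝ) - ρ * (U.card:ℝ)
            + (1/(n:ℝ)^2) * (U.card:ℝ) := by ring
      -- (ρ - ε) * |U| ≤ M
      have hMk : ρ * (U.card:ℝ) - (1/(n:ℝ)^2) * (U.card:ℝ) ≤ (M:ℝ) := by linarith
      rw [hCDr]
      -- now show ρ * |U| ≤ M by integrality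
      have hkn : U.card ≤ n := Finset.card_le_univ U
      have hk1 : 1 ≤ U.card := Finset.card_pos.2 hUne
      have hbk : b * U.card ≤ n * n := Nat.mul_le_mul hbn hkn
      rcases lt_or_eq_of_le hbk with hlt | heq
      · -- generic case: b·|U| < n²
        have q1 : ρ * (b:ℝ) = (a:ℝ) := by rw [hρ]; field_simp
        have h3 := mul_le_mul_of_nonneg_right hMk (le_of_lt (mul_pos hb0 hn2pos))
        have hR' : (ρ * (U.card:ℝ) - (1/(n:ℝ)^2) * (U.card:ℝ)) * ((b:ℝ)*(n:ℝ)^2)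
            = (ρ*(b:ℝ)) * ((U.card:ℝ)*(n:ℝ)^2)
              - ((1/(n:ℝ)^2)*(n:ℝ)^2) * ((b:ℝ)*(U.card:ℝ)) := by ring
        rw [hR', q1] at h3
        have q2 : (1/(n:ℝ)^2)*(n:ℝ)^2 = 1 := by field_simp
        rw [q2, one_mul] at h3
        have hreal : (a:ℝ)*((U.card:ℝ)*(n:ℝ)^2) ≤ (M:ℝ)*((b:ℝ)*(n:ℝ)^2) + (b:ℝ)*(U.card:ℝ) := by
          linarith
        have hNnat0 : a*(U.card*n^2) ≤ M*(b*n^2) + b*U.card := by exact_mod_cast hreal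
        have hNnat : a*U.card*n^2 ≤ M*b*n^2 + b*U.card := by
          rw [Nat.mul_assoc a, Nat.mul_assoc M]; exact hNnat0
        have hlt2 : b*U.card < n^2 := by rw [pow_two]; exact hlt
        have h5 : a*U.card*n^2 < (M*b+1)*n^2 := by
          calc a*U.card*n^2 ≤ M*b*n^2 + b*U.card := hNnat
            _ < M*b*n^2 + n^2 := Nat.add_lt_add_left hlt2 _
            _ = (M*b+1)*n^2 := by ring
        have h6 : a*U.card < M*b + 1 := lt_of_mul_lt_mul_right h5 (Nat.zero_le _)
        have h7 : a*U.card ≤ M*b := Nat.lt_succ_iff.1 h6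
        have h8 : (a:ℝ)*(U.card:ℝ) ≤ (M:ℝ)*(b:ℝ) := by exact_mod_cast h7
        rw [hρ, div_mul_eq_mul_div, div_le_iff₀ hb0]
        linarith
      · -- edge case: b = n and U = univ
        have hb2 : n * n ≤ b * n := by
          calc n*n = b*U.card := heq.symm
            _ ≤ b*n := Nat.mul_le_mul_left _ hkn
        have hbeq : b = n := le_antisymm hbn (Nat.le_of_mul_le_mul_right hb2 (by omega))
        have hkeq : U.card = n := by
          have : b * U.card = b * n := by rw [heq, hbeq]
          exact Nat.eq_of_mul_eq_mul_left (by omega) this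
        have hUuniv : U = Finset.univ := (Finset.card_eq_iff_eq_univ U).1 hkeq
        have hCuniv : C = Finset.univ := Finset.univ_subset_iff.1 (hUuniv ▸ hUC)
        have hS₂univ : S₂ = Finset.univ :=
          Finset.univ_subset_iff.1 (hCuniv ▸ hCsub)
        have hMeq : M = (cliquesIn G h S₂).card := by
          rw [hMdef, hCuniv, hUuniv, Finset.sdiff_self,
            cliquesIn_empty G (by omega : 1 ≤ h), Finset.sdiff_empty, hS₂univ]
        have hcards : (S₂.card : ℝ) = (n:ℝ) := by
          rw [hS₂univ]; exact_mod_cast congrArg Nat.cast Finset.card_univ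
        have haval : ρ * (U.card:ℝ) = (a:ℝ) := by
          rw [hρ, hkeq, hbeq]
          field_simp
        have hub : (a:ℝ) - 1 < ((cliquesIn G h S₂).card : ℝ) := by
          have : ρ * (S₂.card:ℝ) = (a:ℝ) := by
            rw [hρ, hcards, hbeq]; field_simp
          linarith [hglob]
        have hab : a ≤ (cliquesIn G h S₂).card := by
          have : (a:ℝ) < ((cliquesIn G h S₂).card : ℝ) + 1 := by linarith
          exact_mod_cast Nat.lt_succ_iff.1 (by exact_mod_cast this)
        rw [haval, hMeq]
        exact_mod_cast hab
    -- extend C to a maximal compact set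
    obtain ⟨T, hTmem, hTmax⟩ := Finset.exists_max_image
      (Finset.univ.filter fun T : Finset V => IsCliqueCompact G h ρ T ∧ C ⊆ T)
      Finset.card ⟨C, by simp [hCcompact]⟩
    rw [Finset.mem_filter] at hTmem
    obtain ⟨-, hTcomp, hCT⟩ := hTmem
    refine ⟨T, ⟨hTcomp, ?_⟩, hCT hvC⟩
    rintro ⟨S', hss, hS'c⟩
    have hS'mem : S' ∈ Finset.univ.filter
        fun T : Finset V => IsCliqueCompact G h ρ T ∧ C ⊆ T := by
      rw [Finset.mem_filter]
      exact ⟨Finset.mem_univ _, hS'c, hCT.trans hss.subset⟩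
    exact absurd (hTmax S' hS'mem) (not_le.2 (Finset.card_lt_card hss))
  · rintro ⟨S, ⟨hSc, -⟩, hvS⟩
    exact hsub S hSc hvS
end
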